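/- arXiv:1702.00240 — 2 statements merged into one kernel-verified Lean document; each statement's English description precedes it below -/
import Mathlib

section
/- Let C be a category, A a small full subcategory, and E_A : C → Set^(A^op) the restricted Yoneda embedding. If E_A is full and conservative, then every object X of C is a minimal weak colimit of its canonical diagram with respect to A: the canonical cocone (a → X) over the forgetful functor A/X → C is a weak colimit cocone, and every endomorphism f : X → X commuting with all cocone morphisms is an isomorphism. -/
open CategoryTheory CategoryTheory.Limits

universe v u

namespace CategoryTheory.Presheaf

/-- The restricted Yoneda functor, as defined in the older Mathlib (no `ULift`). -/
def restrictedYoneda {C' : Type*} [Category C'] {ℰ : Type*} [Category ℰ] (F : C' ⥤ ℰ) :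
    ℰ ⥤ C'ᵒᵖ ⥤ Type _ :=
  yoneda ⋙ (Functor.whiskeringLeft _ _ _).obj F.op

end CategoryTheory.Presheaf

variable {A : Type v} [SmallCategory A] {C : Type u} [Category.{v} C]

/-- The canonical cocone on the canonical diagram of `X` with respect to the
subcategory `A` (given by `ι : A ⥤ C`). -/
@[simps]
def canonicalCocone (ι : A ⥤ C) (X : C) :
    Cocone (CostructuredArrow.proj ι X ⋙ ι) where
  pt := X
  ι := { app := fun f => f.hom
         naturality := fun _ _ g => (CostructuredArrow.w g).trans (Category.comp_id _).symm }

/-!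
A cocone over the canonical diagram of `X` with vertex `Y` is exactly a natural transformation
`E_A X ⟶ E_A Y`, and a morphism `m : X ⟶ Y` is compatible with the cocone precisely when `E_A m`
is that transformation. Fullness of `E_A` therefore produces the comparison maps of a weak
colimit, and an endomorphism compatible with the canonical cocone has `E_A f = E_A (𝟙 X) = 𝟙`,
so it is an isomorphism by conservativity.
-/

namespace CategoryTheory.Presheaf

variable (ι : A ⥤ C)

def restrictedYonedaHomOfCocone {X : C} (s : Cocone (CostructuredArrow.proj ι X ⋙ ι)) :
    (restrictedYoneda ι).obj X ⟶ (restrictedYoneda ι).obj s.pt where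
  app a := TypeCat.ofHom fun g => s.ι.app (CostructuredArrow.mk g)
  naturality a a' h := by
    ext g
    exact (s.w (CostructuredArrow.homMk h.unop rfl :
      CostructuredArrow.mk (ι.map h.unop ≫ g) ⟶ CostructuredArrow.mk g)).symm

lemma restrictedYoneda_map_eq_restrictedYonedaHomOfCocone_iff {X : C}
    (s : Cocone (CostructuredArrow.proj ι X ⋙ ι)) (m : X ⟶ s.pt) :
    (restrictedYoneda ι).map m = restrictedYonedaHomOfCocone ι s ↔
      ∀ j, (canonicalCocone ι X).ι.app j ≫ m = s.ι.app j := by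
  constructor
  · rintro h ⟨a, ⟨⟨⟩⟩, g⟩
    exact ConcreteCategory.congr_hom (congrFun (congrArg NatTrans.app h) (Opposite.op a)) g
  · intro h
    ext a g
    exact h (CostructuredArrow.mk g)

end CategoryTheory.Presheaf

theorem minimal_weak_colimit_of_full_conservative_general
    (ι : A ⥤ C)
    (hFull : (Presheaf.restrictedYoneda ι).Full)
    (hCons : ∀ ⦃X Y : C⦄ (f : X ⟶ Y),
      IsIso ((Presheaf.restrictedYoneda ι).map f) → IsIso f)
    (X : C) :
    (∀ s : Cocone (CostructuredArrow.proj ι X ⋙ ι),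
        ∃ m : X ⟶ s.pt, ∀ j, (canonicalCocone ι X).ι.app j ≫ m = s.ι.app j) ∧
      (∀ f : X ⟶ X,
        (∀ j, (canonicalCocone ι X).ι.app j ≫ f = (canonicalCocone ι X).ι.app j) →
          IsIso f) := by
  refine ⟨fun s => ?_, fun f hf => hCons f ?_⟩
  · obtain ⟨m, hm⟩ := hFull.map_surjective (Presheaf.restrictedYonedaHomOfCocone ι s)
    exact ⟨m, (Presheaf.restrictedYoneda_map_eq_restrictedYonedaHomOfCocone_iff ι s m).1 hm⟩
  · have compat :=
      Presheaf.restrictedYoneda_map_eq_restrictedYonedaHomOfCocone_iff ι (canonicalCocone ι X)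
    have hf_eq_id :
        (Presheaf.restrictedYoneda ι).map f = (Presheaf.restrictedYoneda ι).map (𝟙 X) :=
      ((compat f).2 hf).trans ((compat (𝟙 X)).2 fun _ => Category.comp_id _).symm
    rw [hf_eq_id, CategoryTheory.Functor.map_id]
    infer_instance

/-- If the restricted Yoneda embedding `E_A : C ⥤ Set^(Aᵒᵖ)` is full and
conservative, then every object `X` of `C` is a minimal weak colimit of its canonical
diagram with respect to `A`: the canonical cocone is a weak colimit cocone, and every
endomorphism of `X` commuting with all cocone morphisms is an isomorphism. -/
theorem minimal_weak_colimit_of_full_conservative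
    (ι : A ⥤ C) [ι.Full] [ι.Faithful]
    (hFull : (Presheaf.restrictedYoneda ι).Full)
    (hCons : ∀ ⦃X Y : C⦄ (f : X ⟶ Y),
      IsIso ((Presheaf.restrictedYoneda ι).map f) → IsIso f)
    (X : C) :
    (∀ s : Cocone (CostructuredArrow.proj ι X ⋙ ι),
        ∃ m : X ⟶ s.pt, ∀ j, (canonicalCocone ι X).ι.app j ≫ m = s.ι.app j) ∧
      (∀ f : X ⟶ X,
        (∀ j, (canonicalCocone ι X).ι.app j ≫ f = (canonicalCocone ι X).ι.app j) →
          IsIso f) :=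
  minimal_weak_colimit_of_full_conservative_general ι hFull hCons X
end

section
/- Let H₁, H₂ : C → D be functors into a pointed category D, let A be a small full subcategory of C, and define for each morphism f : E S → E H₁ A (in a suitable presheaf-type setting) the trace set T_{H}(f) of morphisms t : A → B in A killing f after applying H. If the collections J(H₁) and J(H₂) of all such trace sets coincide and both H₁, H₂ preserve λ-filtered colimits and zero objects, then ker H₁ = ker H₂, where ker H is the class of objects sent to zero. Consequently, since there is only a set of possible collections J(H), there is only a set of distinct kernels of λ-filtered-colimit-preserving, zero-preserving endofunctors. -/
/-!
Present `X` as a `κ`-filtered colimit of a diagram `Dg` in `Kl`. Since each `E P ι s` is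
`κ`-presentable and `E P H` preserves the colimit, every map `E P ι s ⟶ E P H X` factors
through a stage `E P H (Dg j)`, and it vanishes exactly when some transition map
`Dg j ⟶ Dg k` kills it. As `E` reflects zero maps out of the `P ι s`, which detect zero
objects, `X ∈ ker H` iff every trace set of `H` at a stage of `Dg` contains a transition
map of `Dg`. This condition only involves `J(H)`, and the `J(H)` range over a set.
-/

open CategoryTheory CategoryTheory.Limits

universe v u u₂ u₃

/-- A small category `J` is `κ`-filtered if every functor to `J` from a category with
fewer than `κ` morphisms admits a cocone. -/
def IsCardinalFilteredCat (J : Type v) [SmallCategory J] (κ : Cardinal.{v}) : Prop :=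
  ∀ (K : Type v) (_ : SmallCategory K) (F : K ⥤ J),
    Cardinal.mk (Σ (k k' : K), k ⟶ k') < κ → Nonempty (Cocone F)

/-- An object `S` is `κ`-presentable if `Hom(S, -)` preserves `κ`-filtered colimits. -/
def IsCardinalPresentableObj {D : Type u₃} [Category.{v} D] (S : D) (κ : Cardinal.{v}) :
    Prop :=
  ∀ (J : Type v) (_ : SmallCategory J), IsCardinalFilteredCat J κ →
    Nonempty (PreservesColimitsOfShape J (coyoneda.obj (Opposite.op S)))

section Ohkawa

variable {K : Type u} [Category.{v} K]
  {Kl : Type v} [SmallCategory Kl] (ι : Kl ⥤ K)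
  {HoK : Type u₂} [Category.{v} HoK] [HasZeroMorphisms HoK]
  {L : Type u₃} [Category.{v} L] [HasZeroMorphisms L]
  (P : K ⥤ HoK) (E : HoK ⥤ L)

/-- The trace set `T_H(f)` of a morphism `f : E S ⟶ E P H A` (with `S`, `A` in the small
subcategory `Kl`): the set of morphisms `t : A → B` in `Kl` such that
`E P H t ∘ f = 0`. -/
def traceSet (H : K ⥤ K) (s a : Kl)
    (f : E.obj (P.obj (ι.obj s)) ⟶ E.obj (P.obj (H.obj (ι.obj a)))) :
    Set (Σ b : Kl, a ⟶ b) :=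
  { t | f ≫ E.map (P.map (H.map (ι.map t.2))) = 0 }

/-- The collection `J(H)` of all trace sets of `H`. -/
def Jcoll (H : K ⥤ K) : Set (Σ (_s _a : Kl), Set (Σ b : Kl, _a ⟶ b)) :=
  { x | ∃ f : E.obj (P.obj (ι.obj x.1)) ⟶ E.obj (P.obj (H.obj (ι.obj x.2.1))),
      traceSet ι P E H x.1 x.2.1 f = x.2.2 }

/-- The kernel of an endofunctor `H`: the class of objects sent to zero
(after projecting to the homotopy category). -/
def kerSet (H : K ⥤ K) : Set K := { X | IsZero (P.obj (H.obj X)) }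

/-- An endofunctor is good if it preserves `κ`-filtered colimits and zero objects. -/
def GoodEndofunctor (κ : Cardinal.{v}) (H : K ⥤ K) : Prop :=
  (∀ (J : Type v) (_ : SmallCategory J), IsCardinalFilteredCat J κ →
      Nonempty (PreservesColimitsOfShape J H)) ∧
    (∀ X : K, IsZero X → IsZero (H.obj X))

lemma IsCardinalFilteredCat.isFiltered {J : Type v} [SmallCategory J] {κ : Cardinal.{v}}
    (h : IsCardinalFilteredCat J κ) (hκ : Cardinal.aleph0 ≤ κ) : IsFiltered J :=
  IsFiltered.of_cocone_nonempty.{v} J fun {K} _ _ F =>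
    h K _ F (lt_of_lt_of_le (Cardinal.mk_lt_aleph0_iff.mpr inferInstance) hκ)

lemma CategoryTheory.Limits.comp_ι_eq_zero_iff_of_preservesColimit_coyoneda
    {C : Type*} [Category* C] [HasZeroMorphisms C] {J : Type*} [Category* J] [IsFiltered J]
    {D : J ⥤ C} {c : Cocone D}
    (hc : IsColimit c) {X : C} [PreservesColimit D (coyoneda.obj (.op X))] {i : J}
    (f : X ⟶ D.obj i) : f ≫ c.ι.app i = 0 ↔ ∃ (j : J) (a : i ⟶ j), f ≫ D.map a = 0 := by
  constructor
  · intro h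
    obtain ⟨j, a, ha⟩ := exists_eq_of_preservesColimit_coyoneda_self hc f 0 (by simpa using h)
    exact ⟨j, a, by simpa using ha⟩
  · rintro ⟨j, a, ha⟩
    rw [← c.w a, ← Category.assoc, ha, zero_comp]

def TraceSetsMeetDiagram {J : Type v} [SmallCategory J]
    (𝒥 : Set (Σ (_s _a : Kl), Set (Σ b : Kl, _a ⟶ b))) (Dg : J ⥤ Kl) : Prop :=
  ∀ (s : Kl) (j : J) (T : Set (Σ b : Kl, Dg.obj j ⟶ b)), ⟨s, Dg.obj j, T⟩ ∈ 𝒥 →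
    ∃ (k : J) (u : j ⟶ k), ⟨Dg.obj k, Dg.map u⟩ ∈ T

section Kernel

variable [E.PreservesZeroMorphisms] {J : Type v} [SmallCategory J] [IsFiltered J]
  [∀ s : Kl, PreservesColimitsOfShape J (coyoneda.obj (.op (E.obj (P.obj (ι.obj s)))))]
  [PreservesColimitsOfShape J (P ⋙ E)] (H : K ⥤ K) [PreservesColimitsOfShape J H]
  {Dg : J ⥤ Kl} {c : Cocone (Dg ⋙ ι)}

theorem isZero_obj_pt_iff_forall_exists_mem_traceSet
    (hE : ∀ (s : Kl) (Y : HoK) (g : P.obj (ι.obj s) ⟶ Y), E.map g = 0 → g = 0)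
    (hWG : ∀ Y : HoK, (∀ (s : Kl) (g : P.obj (ι.obj s) ⟶ Y), g = 0) → IsZero Y)
    (hc : IsColimit c) :
    IsZero (P.obj (H.obj c.pt)) ↔
      ∀ (s : Kl) (j : J)
        (f : E.obj (P.obj (ι.obj s)) ⟶ E.obj (P.obj (H.obj (ι.obj (Dg.obj j))))),
        ∃ (k : J) (u : j ⟶ k), ⟨Dg.obj k, Dg.map u⟩ ∈ traceSet ι P E H s (Dg.obj j) f := by
  have hc' : IsColimit ((P ⋙ E).mapCocone (H.mapCocone c)) :=
    isColimitOfPreserves (P ⋙ E) (isColimitOfPreserves H hc)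
  constructor
  · intro hX s j f
    have hzero : f ≫ E.map (P.map (H.map (c.ι.app j))) = 0 :=
      (E.map_isZero hX).eq_of_tgt _ _
    exact (comp_ι_eq_zero_iff_of_preservesColimit_coyoneda hc' f).mp hzero
  · intro h
    refine hWG _ fun s g => hE s _ g ?_
    obtain ⟨j, f, hf⟩ := exists_hom_of_preservesColimit_coyoneda hc' (E.map g)
    rw [← hf]
    exact (comp_ι_eq_zero_iff_of_preservesColimit_coyoneda hc' f).mpr (h s j f)

theorem mem_kerSet_iff_traceSetsMeetDiagram
    (hE : ∀ (s : Kl) (Y : HoK) (g : P.obj (ι.obj s) ⟶ Y), E.map g = 0 → g = 0)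
    (hWG : ∀ Y : HoK, (∀ (s : Kl) (g : P.obj (ι.obj s) ⟶ Y), g = 0) → IsZero Y)
    (hc : IsColimit c) :
    c.pt ∈ kerSet P H ↔ TraceSetsMeetDiagram (Jcoll ι P E H) Dg := by
  rw [kerSet, Set.mem_ofPred, isZero_obj_pt_iff_forall_exists_mem_traceSet ι P E H hE hWG hc]
  constructor
  · rintro h s j T ⟨f, hf⟩
    change traceSet ι P E H s (Dg.obj j) f = T at hf
    exact hf ▸ h s j f
  · exact fun h s j f => h s j _ ⟨f, rfl⟩

end Kernel

theorem ohkawa_kernels_form_a_set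
    [E.PreservesZeroMorphisms]
    (κ : Cardinal.{v}) (hκ : κ.IsRegular)
    (hEff : ∀ (s : Kl) (Y : HoK),
      Function.Bijective (fun g : P.obj (ι.obj s) ⟶ Y => E.map g))
    (hWG : ∀ Y : HoK, (∀ (s : Kl) (g : P.obj (ι.obj s) ⟶ Y), g = 0) → IsZero Y)
    (hpres : ∀ s : Kl, IsCardinalPresentableObj (E.obj (P.obj (ι.obj s))) κ)
    (hEP : ∀ (J : Type v) (_ : SmallCategory J), IsCardinalFilteredCat J κ →
      Nonempty (PreservesColimitsOfShape J (P ⋙ E)))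
    (hcolim : ∀ X : K, ∃ (J : Type v) (_ : SmallCategory J),
      IsCardinalFilteredCat J κ ∧ ∃ (Dg : J ⥤ Kl) (c : Cocone (Dg ⋙ ι)),
        c.pt = X ∧ Nonempty (IsColimit c)) :
    (∀ H₁ H₂ : K ⥤ K, GoodEndofunctor κ H₁ → GoodEndofunctor κ H₂ →
        Jcoll ι P E H₁ = Jcoll ι P E H₂ → kerSet P H₁ = kerSet P H₂) ∧
      Small.{v} { S : Set K | ∃ H : K ⥤ K, GoodEndofunctor κ H ∧ S = kerSet P H } := by
  have hE (s : Kl) (Y : HoK) (g : P.obj (ι.obj s) ⟶ Y) (hg : E.map g = 0) : g = 0 :=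
    (hEff s Y).1 (hg.trans (E.map_zero _ _).symm)
  have hker (H₁ H₂ : K ⥤ K) (h₁ : GoodEndofunctor κ H₁) (h₂ : GoodEndofunctor κ H₂)
      (hJ : Jcoll ι P E H₁ = Jcoll ι P E H₂) : kerSet P H₁ = kerSet P H₂ := by
    ext X
    obtain ⟨J, _, hfil, Dg, c, rfl, ⟨hc⟩⟩ := hcolim X
    have := hfil.isFiltered hκ.aleph0_le
    have := fun s => (hpres s J _ hfil).some
    have := (hEP J _ hfil).some
    have := (h₁.1 J _ hfil).some
    have := (h₂.1 J _ hfil).some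
    rw [mem_kerSet_iff_traceSetsMeetDiagram ι P E H₁ hE hWG hc,
      mem_kerSet_iff_traceSetsMeetDiagram ι P E H₂ hE hWG hc, hJ]
  refine ⟨hker, small_of_injective (f := fun S => Jcoll ι P E S.2.choose) ?_⟩
  rintro ⟨_, hS₁⟩ ⟨_, hS₂⟩ hJ
  exact Subtype.ext <| hS₁.choose_spec.2.trans <|
    (hker _ _ hS₁.choose_spec.1 hS₂.choose_spec.1 hJ).trans hS₂.choose_spec.2.symm

end Ohkawa
end
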